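/- arXiv:2411.17037 — 5 statements merged into one kernel-verified Lean document; each statement's English description precedes it below -/
import Mathlib

section
/- Let X be a Hausdorff topological space and f : X → X a continuous function. For every u ∈ ℱ(X) (normal upper semicontinuous fuzzy set with compact support) and every α ∈ [0,1], the α-cut of the Zadeh extension satisfies (f̂(u))_α = f(u_α). -/
open Set Filter Topology
open scoped Uniformity

/-- The α-cut of a fuzzy set: `{x | α ≤ u x}` for `α ≠ 0`, and the support
(closure of `{x | 0 < u x}`) for `α = 0`. -/
noncomputable def fuzzyCut {X : Type*} [TopologicalSpace X] (u : X → ℝ) (α : ℝ) : Set X :=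
  if α = 0 then closure {x | 0 < u x} else {x | α ≤ u x}

/-- `u` belongs to `ℱ(X)`: a normal upper semicontinuous `[0,1]`-valued fuzzy set
with compact support. -/
structure IsFuzzySet {X : Type*} [TopologicalSpace X] (u : X → ℝ) : Prop where
  mem_Icc : ∀ x, u x ∈ Set.Icc (0:ℝ) 1
  usc : UpperSemicontinuous u
  normal : ∃ x, u x = 1
  compact_supp : IsCompact (closure {x | 0 < u x})

/-- The Zadeh extension of `f`: `x ↦ sup {u z : f z = x}` (and `0` when the
preimage is empty, since `sSup ∅ = 0` in `ℝ`). -/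
noncomputable def zadeh {X : Type*} (f : X → X) (u : X → ℝ) : X → ℝ :=
  fun x => sSup (u '' (f ⁻¹' {x}))

/-- `W(A) = ⋃ a ∈ A, W(a)` where `W(a) = {y | (a, y) ∈ W}`. -/
def ballImage {Y : Type*} (W : Set (Y × Y)) (A : Set Y) : Set Y :=
  {y | ∃ a ∈ A, (a, y) ∈ W}

/-- The Hausdorff entourage relation `𝒦[W]`: `(A,B) ∈ 𝒦[W]` iff `A ⊆ W(B)` and `B ⊆ W(A)`. -/
def KRel {Y : Type*} (W : Set (Y × Y)) (A B : Set Y) : Prop :=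
  A ⊆ ballImage W B ∧ B ⊆ ballImage W A

/-- The level-wise entourage relation `ℱ[W]`: `(u_α, v_α) ∈ 𝒦[W]` for all `α ∈ [0,1]`. -/
def FRel {X : Type*} [TopologicalSpace X] (W : Set (X × X)) (u v : X → ℝ) : Prop :=
  ∀ α ∈ Set.Icc (0:ℝ) 1, KRel W (fuzzyCut u α) (fuzzyCut v α)

/-- The Skorokhod entourage relation `G[W, ε]`: there is an increasing homeomorphism `t`
of `[0,1]` with `‖t‖ < ε` and `(u_α, v_{t α}) ∈ 𝒦[W]` for all `α ∈ [0,1]`. -/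
def SkoRel {X : Type*} [TopologicalSpace X] (W : Set (X × X)) (ε : ℝ) (u v : X → ℝ) : Prop :=
  ∃ t : ℝ → ℝ, StrictMonoOn t (Set.Icc 0 1) ∧ t 0 = 0 ∧ t 1 = 1 ∧
    Set.MapsTo t (Set.Icc 0 1) (Set.Icc 0 1) ∧ Set.SurjOn t (Set.Icc 0 1) (Set.Icc 0 1) ∧
    (∀ α ∈ Set.Icc (0:ℝ) 1, |t α - α| < ε) ∧
    (∀ α ∈ Set.Icc (0:ℝ) 1, KRel W (fuzzyCut u α) (fuzzyCut v (t α)))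

/-- The sendograph of `u`: `end(u) ∩ (u₀ × [0,1])`. -/
noncomputable def send {X : Type*} [TopologicalSpace X] (u : X → ℝ) : Set (X × ℝ) :=
  {p | p.1 ∈ fuzzyCut u 0 ∧ p.2 ∈ Set.Icc (0:ℝ) 1 ∧ p.2 ≤ u p.1}

/-- The product entourage `U × V_ε` on `X × [0,1]`. -/
def prodEnt {X : Type*} (U : Set (X × X)) (ε : ℝ) : Set ((X × ℝ) × (X × ℝ)) :=
  {p | (p.1.1, p.2.1) ∈ U ∧ |p.1.2 - p.2.2| < ε}

/-- The sendograph entourage relation `S[U, ε]`. -/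
noncomputable def SendRel {X : Type*} [TopologicalSpace X] (U : Set (X × X)) (ε : ℝ)
    (u v : X → ℝ) : Prop :=
  KRel (prodEnt U ε) (send u) (send v)

/-- `u_{α⁺} = closure (⋃ β ∈ (α, 1], u_β)`, the right limit of the level map. -/
noncomputable def cutPlus {X : Type*} [TopologicalSpace X] (u : X → ℝ) (α : ℝ) : Set X :=
  closure (⋃ β ∈ Set.Ioc α 1, fuzzyCut u β)

/-- `B` belongs to the Vietoris basic open set `⟨V 0, …, V (k-1)⟩`. -/
def inVietoris {Y : Type*} (B : Set Y) (k : ℕ) (V : Fin k → Set Y) : Prop :=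
  B ⊆ (⋃ i, V i) ∧ ∀ i, (B ∩ V i).Nonempty

/-!
For positive values the supremum defining `f̂(u)(x)` is attained: the part of the fibre
`f⁻¹(x)` on which `u` is at least a given positive value is closed in the compact support, so the
upper semicontinuous `u` has a maximum there. This identifies the α-cuts for `α > 0` and the
set `{f̂(u) > 0}` with images under `f`; for the support one takes closures, which commute with
the continuous image of a set with compact closure in a Hausdorff space.
-/

section Zadeh

variable {X : Type*} {f : X → X} {u : X → ℝ}

theorem le_zadeh_apply (hu : BddAbove (range u)) (z : X) : u z ≤ zadeh f u (f z) :=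
  le_csSup (hu.mono (image_subset_range _ _)) ⟨z, rfl, rfl⟩

theorem exists_eq_zadeh_of_pos [TopologicalSpace X] [T1Space X] (hf : Continuous f)
    (husc : UpperSemicontinuous u) (hsupp : IsCompact (closure {x | 0 < u x})) {x : X}
    (hx : 0 < zadeh f u x) : ∃ z, f z = x ∧ u z = zadeh f u x := by
  have hne : (u '' (f ⁻¹' {x})).Nonempty := by
    by_contra h
    rw [not_nonempty_iff_eq_empty] at h
    simp [zadeh, h] at hx
  obtain ⟨_, ⟨y, hy, rfl⟩, hy_pos⟩ := exists_lt_of_lt_csSup hne hx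
  set K := f ⁻¹' {x} ∩ {z | u y ≤ u z}
  have hK_closed : IsClosed K :=
    (isClosed_singleton.preimage hf).inter (husc.isClosed_preimage (u y))
  have hK : IsCompact K :=
    hsupp.of_isClosed_subset hK_closed fun z hz => subset_closure (hy_pos.trans_le hz.2)
  obtain ⟨z, hzK, hz_max⟩ :=
    (husc.upperSemicontinuousOn K).exists_isMaxOn (s := K) ⟨y, hy, le_refl (u y)⟩ hK
  have hz_greatest : IsGreatest (u '' (f ⁻¹' {x})) (u z) := by
    refine ⟨mem_image_of_mem u hzK.1, ?_⟩
    rintro _ ⟨w, hw, rfl⟩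
    rcases le_or_gt (u y) (u w) with h | h
    · exact hz_max ⟨hw, h⟩
    · exact h.le.trans hzK.2
  exact ⟨z, hzK.1, hz_greatest.csSup_eq.symm⟩

end Zadeh

namespace IsFuzzySet

variable {X : Type*} [TopologicalSpace X] {f : X → X} {u : X → ℝ}

theorem bddAbove_range (hu : IsFuzzySet u) : BddAbove (range u) :=
  ⟨1, by rintro _ ⟨z, rfl⟩; exact (hu.mem_Icc z).2⟩

variable [T1Space X]

theorem zadeh_superlevelSet_eq (hu : IsFuzzySet u) (hf : Continuous f) {α : ℝ} (hα : 0 < α) :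
    {x | α ≤ zadeh f u x} = f '' {x | α ≤ u x} := by
  ext x
  constructor
  · intro hx
    obtain ⟨z, rfl, hz⟩ := exists_eq_zadeh_of_pos hf hu.usc hu.compact_supp (hα.trans_le hx)
    exact ⟨z, hx.trans hz.ge, rfl⟩
  · rintro ⟨z, hz, rfl⟩
    exact hz.trans (le_zadeh_apply hu.bddAbove_range z)

theorem zadeh_posSet_eq (hu : IsFuzzySet u) (hf : Continuous f) :
    {x | 0 < zadeh f u x} = f '' {x | 0 < u x} := by
  ext x
  constructor
  · intro hx
    obtain ⟨z, rfl, hz⟩ := exists_eq_zadeh_of_pos hf hu.usc hu.compact_supp hx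
    exact ⟨z, hx.trans_le hz.ge, rfl⟩
  · rintro ⟨z, hz, rfl⟩
    exact hz.trans_le (le_zadeh_apply hu.bddAbove_range z)

end IsFuzzySet

theorem stmt4 {X : Type*} [TopologicalSpace X] [T2Space X] {f : X → X} (hf : Continuous f)
    {u : X → ℝ} (hu : IsFuzzySet u) {α : ℝ} (hα : α ∈ Set.Icc (0:ℝ) 1) :
    fuzzyCut (zadeh f u) α = f '' fuzzyCut u α := by
  rcases hα.1.eq_or_lt with rfl | hα_pos
  · simp only [fuzzyCut, if_true]
    rw [hu.zadeh_posSet_eq hf, image_closure_of_isCompact hu.compact_supp hf.continuousOn]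
  · simp only [fuzzyCut, hα_pos.ne', if_false]
    exact hu.zadeh_superlevelSet_eq hf hα_pos
end

section
/- Let X be a Hausdorff space, u ∈ ℱ(X), and f : X → X continuous. Then send(f̂(u)) = (f × id_{[0,1]})(send(u)), where send(u) = {(x, α) ∈ u_0 × [0,1] : u(x) ≥ α or α = 0 with x ∈ u_0}, i.e., the sendograph of the Zadeh extension is the image of the sendograph under f × id. -/
open Set Filter Topology
open scoped Uniformity

/-! The supremum defining `f̂(u)(y)` is taken over the closed fibre `f⁻¹(y)`. When it is positive,
only points of the compact support `u₀` matter, and there the upper semicontinuous `u` attains its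
maximum; so every positive level `α ≤ f̂(u)(y)` is reached by some `z` with `f z = y`. Moreover
`f̂(u)` is positive exactly on `f '' {u > 0}`, and since `f '' u₀` is compact, hence closed, the
support of `f̂(u)` is `f '' u₀`. -/

theorem UpperSemicontinuous.exists_le_of_le_sSup_image {X : Type*} [TopologicalSpace X]
    {u : X → ℝ} (husc : UpperSemicontinuous u) (hu0 : ∀ x, 0 ≤ u x)
    (hK : IsCompact (closure {x | 0 < u x})) {C : Set X} (hC : IsClosed C)
    {α : ℝ} (hα : 0 < α) (hαC : α ≤ sSup (u '' C)) : ∃ z ∈ C, α ≤ u z := by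
  have hpos : 0 < sSup (u '' C) := hα.trans_le hαC
  have hne : (u '' C).Nonempty :=
    nonempty_iff_ne_empty.mpr fun h => by simp [h] at hpos
  obtain ⟨_, ⟨w, hwC, rfl⟩, hw⟩ := exists_lt_of_lt_csSup hne hpos
  have hS : (C ∩ closure {x | 0 < u x}).Nonempty := ⟨w, hwC, subset_closure hw⟩
  obtain ⟨z, hzS, hmax⟩ :=
    (husc.upperSemicontinuousOn _).exists_isMaxOn hS (hK.inter_left hC)
  refine ⟨z, hzS.1, hαC.trans (csSup_le hne ?_)⟩
  rintro _ ⟨x, hxC, rfl⟩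
  by_cases hx : 0 < u x
  · exact isMaxOn_iff.mp hmax x ⟨hxC, subset_closure hx⟩
  · exact (not_lt.mp hx).trans (hu0 z)

section Zadeh

variable {X : Type*} {u : X → ℝ}

theorem le_zadeh (f : X → X) (hb : BddAbove (range u)) (z : X) : u z ≤ zadeh f u (f z) :=
  le_csSup (hb.mono (image_subset_range _ _)) ⟨z, rfl, rfl⟩

theorem image_pos_subset_zadeh_pos (f : X → X) (hb : BddAbove (range u)) :
    f '' {x | 0 < u x} ⊆ {y | 0 < zadeh f u y} := by
  rintro _ ⟨z, hz, rfl⟩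
  exact hz.trans_le (le_zadeh f hb z)

theorem zadeh_pos_subset_image_pos (f : X → X) (u : X → ℝ) :
    {y | 0 < zadeh f u y} ⊆ f '' {x | 0 < u x} := by
  intro y hy
  have hne : (u '' (f ⁻¹' {y})).Nonempty :=
    nonempty_iff_ne_empty.mpr fun h => by simp [zadeh, h] at hy
  obtain ⟨_, ⟨z, hz, rfl⟩, hz0⟩ := exists_lt_of_lt_csSup hne hy
  exact ⟨z, hz0, hz⟩

theorem closure_zadeh_pos [TopologicalSpace X] [T2Space X] {f : X → X} (hf : Continuous f)
    (hb : BddAbove (range u)) (hK : IsCompact (closure {x | 0 < u x})) :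
    closure {y | 0 < zadeh f u y} = f '' closure {x | 0 < u x} :=
  Subset.antisymm
    (closure_minimal ((zadeh_pos_subset_image_pos f u).trans (image_mono subset_closure))
      (hK.image hf).isClosed)
    ((image_closure_subset_closure_image hf).trans
      (closure_mono (image_pos_subset_zadeh_pos f hb)))

end Zadeh

/-- The sendograph of the Zadeh extension is the image of the sendograph
under `f × id`. -/
theorem stmt8 {X : Type*} [TopologicalSpace X] [T2Space X] {f : X → X} (hf : Continuous f)
    {u : X → ℝ} (hu : IsFuzzySet u) :
    send (zadeh f u) = Prod.map f id '' send u := by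
  have hb : BddAbove (range u) := ⟨1, by rintro _ ⟨x, rfl⟩; exact (hu.mem_Icc x).2⟩
  ext ⟨y, α⟩
  simp only [send, fuzzyCut, ↓reduceIte, closure_zadeh_pos hf hb hu.compact_supp,
    mem_image, Prod.exists, Prod.map, Prod.mk.injEq, id]
  constructor
  · rintro ⟨⟨z₀, hz₀, rfl⟩, hαI, hαle⟩
    rcases hαI.1.eq_or_lt with rfl | hα
    · exact ⟨z₀, 0, ⟨hz₀, hαI, (hu.mem_Icc z₀).1⟩, rfl, rfl⟩
    · obtain ⟨z, hz, hαz⟩ := hu.usc.exists_le_of_le_sSup_image (fun x => (hu.mem_Icc x).1)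
        hu.compact_supp (isClosed_singleton.preimage hf) hα hαle
      exact ⟨z, α, ⟨subset_closure (hα.trans_le hαz), hαI, hαz⟩, hz, rfl⟩
  · rintro ⟨z, β, ⟨hz, hβ, hβz⟩, rfl, rfl⟩
    exact ⟨mem_image_of_mem f hz, hβ, hβz.trans (le_zadeh f hb z)⟩
end

section
/- Let X be a Hausdorff space and u ∈ ℱ(X). The level map L_u : [0,1] → 𝒦(X), α ↦ u_α (with u_0 the support), is left continuous on (0,1] with respect to the Vietoris topology on 𝒦(X). -/
open Set Filter Topology
open scoped Uniformity

/-- The level map `α ↦ u_α` is left continuous on `(0,1]` with respect to the Vietoris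
topology: every Vietoris basic neighborhood of `u_α` contains `u_λ` for all
`λ ∈ [0,1]` with `α - δ < λ ≤ α`, for some `δ > 0`. -/
theorem stmt12 {X : Type*} [TopologicalSpace X] [T2Space X] {u : X → ℝ}
    (hu : IsFuzzySet u) :
    ∀ α ∈ Set.Ioc (0:ℝ) 1, ∀ (k : ℕ) (V : Fin k → Set X),
      (∀ i, IsOpen (V i)) → inVietoris (fuzzyCut u α) k V →
      ∃ δ > (0:ℝ), ∀ lam ∈ Set.Icc (0:ℝ) 1, α - δ < lam → lam ≤ α →
        inVietoris (fuzzyCut u lam) k V := by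
  rintro α ⟨hα0, hα1⟩ k V hVopen ⟨hsub, hne⟩
  have hcutα : fuzzyCut u α = {x | α ≤ u x} := by
    simp [fuzzyCut, hα0.ne']
  -- Claim: some strictly smaller cut is still inside ⋃ V i
  have key : ∃ lam0 ∈ Set.Ioo (0:ℝ) α, {x | lam0 ≤ u x} ⊆ ⋃ i, V i := by
    by_contra h
    push_neg at h
    set lamn : ℕ → ℝ := fun n => α - α / (n + 2) with hlamn
    have hlam_pos : ∀ n, 0 < lamn n := by
      intro n
      have h2 : (0:ℝ) < (n:ℝ) + 2 := by positivity
      have : α / (n + 2) < α := by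
        rw [div_lt_iff₀ h2]
        nlinarith
      simpa [hlamn] using sub_pos.mpr this
    have hlam_lt : ∀ n, lamn n < α := fun n => by
      have : 0 < α / (n + 2) := by positivity
      simp [hlamn]; linarith
    have hlam_mono : ∀ n, lamn n ≤ lamn (n + 1) := by
      intro n
      have h2 : (0:ℝ) < (n:ℝ) + 2 := by positivity
      have h3 : (0:ℝ) < (n:ℝ) + 3 := by positivity
      have : α / ((n:ℝ) + 1 + 2) ≤ α / ((n:ℝ) + 2) := by
        apply div_le_div_of_nonneg_left hα0.le h2
        linarith
      simp only [hlamn]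
      push_cast
      linarith
    set F : ℕ → Set X := fun n => {x | lamn n ≤ u x} ∩ (⋃ i, V i)ᶜ with hF
    have hFclosed : ∀ n, IsClosed (F n) := by
      intro n
      exact (hu.usc.isClosed_preimage (lamn n)).inter
        (isClosed_compl_iff.mpr (isOpen_iUnion hVopen))
    have hFsubK : ∀ n, F n ⊆ closure {x | 0 < u x} := by
      intro n x hx
      exact subset_closure (lt_of_lt_of_le (hlam_pos n) hx.1)
    have hFne : ∀ n, (F n).Nonempty := by
      intro n
      rcases not_subset.mp (h (lamn n) ⟨hlam_pos n, hlam_lt n⟩) with ⟨x, hx1, hx2⟩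
      exact ⟨x, hx1, hx2⟩
    have hFdec : ∀ n, F (n + 1) ⊆ F n := by
      intro n x hx
      exact ⟨le_trans (hlam_mono n) hx.1, hx.2⟩
    have hF0 : IsCompact (F 0) :=
      hu.compact_supp.of_isClosed_subset (hFclosed 0) (hFsubK 0)
    obtain ⟨x, hx⟩ := IsCompact.nonempty_iInter_of_sequence_nonempty_isCompact_isClosed
      F hFdec hFne hF0 hFclosed
    simp only [Set.mem_iInter] at hx
    have hxα : α ≤ u x := by
      have htend : Filter.Tendsto lamn Filter.atTop (𝓝 α) := by
        have : Filter.Tendsto (fun n : ℕ => α / ((n:ℝ) + 2)) Filter.atTop (𝓝 0) := by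
          apply Filter.Tendsto.div_atTop tendsto_const_nhds
          exact Filter.tendsto_atTop_add_const_right _ 2 tendsto_natCast_atTop_atTop
        simpa [hlamn] using tendsto_const_nhds.sub this
      exact le_of_tendsto htend (Filter.Eventually.of_forall fun n => (hx n).1)
    have : x ∈ ⋃ i, V i := hsub (hcutα ▸ hxα)
    exact (hx 0).2 this
  obtain ⟨lam0, ⟨hlam0_pos, hlam0_lt⟩, hlam0_sub⟩ := key
  refine ⟨α - lam0, by linarith, ?_⟩
  rintro lam ⟨hlam0', hlam1⟩ hlamgt hlamle
  have hlam_pos : 0 < lam := by linarith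
  have hcutlam : fuzzyCut u lam = {x | lam ≤ u x} := by
    simp [fuzzyCut, hlam_pos.ne']
  constructor
  · rw [hcutlam]
    intro x hx
    simp only [Set.mem_setOf_eq] at hx
    exact hlam0_sub (show lam0 ≤ u x by linarith)
  · intro i
    obtain ⟨x, hx1, hx2⟩ := hne i
    rw [hcutα] at hx1
    exact ⟨x, hcutlam ▸ le_trans hlamle hx1, hx2⟩
end

section
/- Let (X, 𝒰) be a uniform space and u ∈ ℱ(X). For every entourage W ∈ 𝒰, there exist numbers 0 = α₀ < α₁ < ⋯ < α_n = 1 such that (u_{α_k⁺}, u_{α_{k+1}}) ∈ 𝒦[W] for k = 0, 1, ..., n−1, where u_{α⁺} = lim_{λ→α⁺} u_λ = closure of ⋃_{β>α} u_β. -/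
/-
For `α < 1` the compact set `u_{α⁺}` lies in the closure of the increasing union of the
`u_β`, `β ∈ (α, 1]`, so a single `W(u_β)` already covers it. For `γ > 0`, upper
semicontinuity gives `⋂_{δ < γ} u_{δ⁺} = u_γ`, so by compactness `u_{δ⁺} ⊆ W(u_γ)` for some
`δ < γ`. These two local steps are glued into a finite chain from `0` to `1` by a supremum
argument; the reverse inclusion `u_{α_{k+1}} ⊆ u_{α_k⁺}` is automatic.
-/


open Set Filter Topology
open scoped Uniformity

section Chain

variable {α : Type*}

def ChainReachable [Preorder α] (R : α → α → Prop) (a b : α) : Prop :=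
  ∃ (n : ℕ) (c : Fin (n + 1) → α), StrictMono c ∧ c 0 = a ∧ c (Fin.last n) = b ∧
    ∀ k : Fin n, R (c k.castSucc) (c k.succ)

namespace ChainReachable

variable [Preorder α] {R : α → α → Prop} {a b d : α}

theorem refl (a : α) : ChainReachable R a a :=
  ⟨0, fun _ => a, Fin.strictMono_iff_lt_succ.2 Fin.elim0, rfl, rfl, Fin.elim0⟩

theorem snoc (h : ChainReachable R a b) (hbd : b < d) (hR : R b d) : ChainReachable R a d := by
  obtain ⟨n, c, hc, hc0, hcn, hcR⟩ := h
  refine ⟨n + 1, Fin.snoc c d, ?_, ?_, Fin.snoc_last _ _, fun k => ?_⟩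
  · refine Fin.strictMono_iff_lt_succ.2 fun i => Fin.lastCases ?_ (fun j => ?_) i
    · simpa [hcn] using hbd
    · rw [Fin.succ_castSucc, Fin.snoc_castSucc, Fin.snoc_castSucc]
      exact hc Fin.castSucc_lt_succ
  · simpa using hc0
  · refine Fin.lastCases ?_ (fun j => ?_) k
    · simpa [hcn] using hR
    · rw [Fin.succ_castSucc, Fin.snoc_castSucc, Fin.snoc_castSucc]
      exact hcR j

end ChainReachable

theorem chainReachable_of_forall_exists [ConditionallyCompleteLinearOrder α]
    {R : α → α → Prop} {a b : α} (hab : a ≤ b)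
    (hright : ∀ x ∈ Ico a b, ∃ y ∈ Ioc x b, R x y)
    (hleft : ∀ z ∈ Ioc a b, ∃ w ∈ Ico a z, ∀ x ∈ Ico w z, R x z) :
    ChainReachable R a b := by
  set S := {z | z ≤ b ∧ ChainReachable R a z}
  have hSne : S.Nonempty := ⟨a, hab, .refl a⟩
  have hSbdd : BddAbove S := ⟨b, fun _ hz => hz.1⟩
  have haS : a ≤ sSup S := le_csSup hSbdd ⟨hab, .refl a⟩
  have hSb : sSup S ≤ b := csSup_le hSne fun _ hz => hz.1
  have hsup : ChainReachable R a (sSup S) := by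
    rcases haS.eq_or_lt with heq | hlt
    · exact heq ▸ .refl a
    obtain ⟨w, hw, hwR⟩ := hleft _ ⟨hlt, hSb⟩
    obtain ⟨z, hzS, hwz⟩ := exists_lt_of_lt_csSup hSne hw.2
    rcases (le_csSup hSbdd hzS).eq_or_lt with heq | hzlt
    · exact heq ▸ hzS.2
    · exact hzS.2.snoc hzlt (hwR z ⟨hwz.le, hzlt⟩)
  rcases hSb.eq_or_lt with heq | hlt
  · exact heq ▸ hsup
  obtain ⟨y, hy, hRy⟩ := hright _ ⟨haS, hlt⟩
  exact absurd (le_csSup hSbdd ⟨hy.2, hsup.snoc hy.1 hRy⟩) hy.1.not_ge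

end Chain

section BallImage

variable {Y : Type*} {W : Set (Y × Y)}

theorem ballImage_mono {A B : Set Y} (h : A ⊆ B) :
    ballImage W A ⊆ ballImage W B := fun _ ⟨a, ha, haW⟩ => ⟨a, h ha, haW⟩

theorem ballImage_mono_left {W' : Set (Y × Y)} (h : W ⊆ W') (A : Set Y) :
    ballImage W A ⊆ ballImage W' A := fun _ ⟨a, ha, haW⟩ => ⟨a, ha, h haW⟩

theorem ballImage_iUnion {ι : Type*} (A : ι → Set Y) :
    ballImage W (⋃ i, A i) = ⋃ i, ballImage W (A i) := by
  ext y
  simp only [ballImage, mem_iUnion]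
  exact ⟨fun ⟨a, ⟨i, ha⟩, haW⟩ => ⟨i, a, ha, haW⟩, fun ⟨i, a, ha, haW⟩ => ⟨a, ⟨i, ha⟩, haW⟩⟩

theorem isOpen_ballImage [TopologicalSpace Y] (hW : IsOpen W) (A : Set Y) :
    IsOpen (ballImage W A) := by
  have : ballImage W A = ⋃ a ∈ A, Prod.mk a ⁻¹' W := by
    ext
    simp [ballImage]
  exact this ▸ isOpen_biUnion fun a _ => hW.preimage (Continuous.prodMk_right a)

end BallImage

section Uniform

variable {X : Type*} [UniformSpace X] {W : Set (X × X)} {A : Set X}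

theorem subset_ballImage (hW : W ∈ 𝓤 X) : A ⊆ ballImage W A :=
  fun a ha => ⟨a, ha, refl_mem_uniformity hW⟩

theorem closure_subset_ballImage (hW : W ∈ 𝓤 X) : closure A ⊆ ballImage W A := fun x hx =>
  let ⟨a, haW, ha⟩ := mem_closure_iff_nhds.1 hx _ (mem_nhds_right x hW)
  ⟨a, ha, haW⟩

theorem ballImage_mem_nhds (hW : W ∈ 𝓤 X) {x : X} (hx : x ∈ A) : ballImage W A ∈ 𝓝 x :=
  mem_of_superset (mem_nhds_left x hW) fun _ hy => ⟨x, hx, hy⟩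

end Uniform

section Cuts

variable {X : Type*} [TopologicalSpace X] {u : X → ℝ} {α β γ : ℝ}

theorem fuzzyCut_of_ne_zero (hα : α ≠ 0) : fuzzyCut u α = {x | α ≤ u x} := if_neg hα

theorem fuzzyCut_anti (hα : 0 < α) (h : α ≤ β) : fuzzyCut u β ⊆ fuzzyCut u α := by
  rw [fuzzyCut_of_ne_zero hα.ne', fuzzyCut_of_ne_zero (hα.trans_le h).ne']
  exact fun x hx => h.trans hx

theorem biUnion_fuzzyCut_subset (hα : 0 ≤ α) :
    ⋃ β ∈ Ioc α 1, fuzzyCut u β ⊆ {x | α < u x} := by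
  simp only [iUnion_subset_iff]
  intro β hβ x hx
  rw [fuzzyCut_of_ne_zero (hα.trans_lt hβ.1).ne'] at hx
  exact hβ.1.trans_le hx

theorem antitone_cutPlus : Antitone (cutPlus u) := fun _ _ h =>
  closure_mono <| biUnion_subset_biUnion_left <| Ioc_subset_Ioc_left h

theorem fuzzyCut_subset_cutPlus (hαβ : α < β) (hβ : β ≤ 1) : fuzzyCut u β ⊆ cutPlus u α :=
  (subset_biUnion_of_mem (show β ∈ Ioc α 1 from ⟨hαβ, hβ⟩)).trans subset_closure

theorem cutPlus_subset_support (hα : 0 ≤ α) : cutPlus u α ⊆ closure {x | 0 < u x} :=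
  closure_mono <| (biUnion_fuzzyCut_subset hα).trans fun _ hx => hα.trans_lt hx

theorem UpperSemicontinuous.cutPlus_subset (hu : UpperSemicontinuous u) (hα : 0 ≤ α) :
    cutPlus u α ⊆ {x | α ≤ u x} :=
  closure_minimal ((biUnion_fuzzyCut_subset hα).trans <| ofPred_subset_ofPred.2 fun _ => le_of_lt)
    (upperSemicontinuous_iff_isClosed_preimage.1 hu α)

namespace IsFuzzySet

theorem isCompact_cutPlus (hu : IsFuzzySet u) (hα : 0 ≤ α) : IsCompact (cutPlus u α) :=
  hu.compact_supp.of_isClosed_subset isClosed_closure (cutPlus_subset_support hα)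

theorem iInter_cutPlus_subset (hu : IsFuzzySet u) (hγ : 0 < γ) :
    ⋂ δ : Ico 0 γ, cutPlus u δ ⊆ fuzzyCut u γ := by
  intro x hx
  rw [mem_iInter] at hx
  rw [fuzzyCut_of_ne_zero hγ.ne', mem_ofPred]
  refine le_of_forall_lt_imp_le_of_dense fun δ hδ => ?_
  rcases lt_or_ge δ 0 with hδ0 | hδ0
  · exact hδ0.le.trans (hu.mem_Icc x).1
  · exact hu.usc.cutPlus_subset hδ0 (hx ⟨δ, hδ0, hδ⟩)

end IsFuzzySet

end Cuts

section Steps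

variable {X : Type*} [UniformSpace X] {u : X → ℝ} {W : Set (X × X)} {α γ : ℝ}

namespace IsFuzzySet

theorem exists_cutPlus_subset_ballImage_gt (hu : IsFuzzySet u) (hW : W ∈ 𝓤 X) (hα : 0 ≤ α)
    (hα1 : α < 1) : ∃ β ∈ Ioc α 1, cutPlus u α ⊆ ballImage W (fuzzyCut u β) := by
  obtain ⟨V, ⟨hV, hVo⟩, hVW⟩ := uniformity_hasBasis_open.mem_iff.1 hW
  have : Nonempty (Ioc α 1) := ⟨⟨1, hα1, le_rfl⟩⟩
  have hcover : cutPlus u α ⊆ ⋃ β : Ioc α 1, ballImage V (fuzzyCut u β) := by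
    rw [← ballImage_iUnion, iUnion_subtype]
    exact closure_subset_ballImage hV
  have hdir : Directed (· ⊆ ·) fun β : Ioc α 1 => ballImage V (fuzzyCut u β) :=
    Antitone.directed_le fun β₁ _ h => ballImage_mono (fuzzyCut_anti (hα.trans_lt β₁.2.1) h)
  obtain ⟨β, hβ⟩ := (hu.isCompact_cutPlus hα).elim_directed_cover _
    (fun _ => isOpen_ballImage hVo _) hcover hdir
  exact ⟨β, β.2, hβ.trans (ballImage_mono_left hVW _)⟩

theorem exists_cutPlus_subset_ballImage_lt (hu : IsFuzzySet u) (hW : W ∈ 𝓤 X) (hγ : 0 < γ) :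
    ∃ δ ∈ Ico 0 γ, cutPlus u δ ⊆ ballImage W (fuzzyCut u γ) := by
  have : Nonempty (Ico 0 γ) := ⟨⟨0, le_rfl, hγ⟩⟩
  obtain ⟨δ, hδ⟩ := exists_subset_nhds_of_isCompact' (V := fun δ : Ico 0 γ => cutPlus u δ)
    (Antitone.directed_ge fun _ _ h => antitone_cutPlus h)
    (fun δ => hu.isCompact_cutPlus δ.2.1) (fun _ => isClosed_closure)
    (fun _ hx => ballImage_mem_nhds hW (hu.iInter_cutPlus_subset hγ hx))
  exact ⟨δ, δ.2, hδ⟩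

end IsFuzzySet

end Steps

/-- For every `u ∈ ℱ(X)` and every entourage `W`, there is a partition
`0 = α₀ < α₁ < ⋯ < α_n = 1` with `(u_{α_k⁺}, u_{α_{k+1}}) ∈ 𝒦[W]` for all `k`. -/
theorem stmt13 {X : Type*} [UniformSpace X] {u : X → ℝ} (hu : IsFuzzySet u) :
    ∀ W ∈ 𝓤 X, ∃ (n : ℕ) (a : Fin (n + 1) → ℝ), 0 < n ∧ StrictMono a ∧
      a 0 = 0 ∧ a (Fin.last n) = 1 ∧
      ∀ k : Fin n, KRel W (cutPlus u (a k.castSucc)) (fuzzyCut u (a k.succ)) := by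
  intro W hW
  obtain ⟨n, a, ha, ha0, han, hstep⟩ :=
    chainReachable_of_forall_exists (R := fun α β => cutPlus u α ⊆ ballImage W (fuzzyCut u β))
      zero_le_one (fun α hα => hu.exists_cutPlus_subset_ballImage_gt hW hα.1 hα.2)
      fun γ hγ => (hu.exists_cutPlus_subset_ballImage_lt hW hγ.1).imp fun δ ⟨hδ, hsub⟩ =>
        ⟨hδ, fun α hα => (antitone_cutPlus hα.1).trans hsub⟩
  have hn : 0 < n := Nat.pos_of_ne_zero <| by
    rintro rfl
    exact zero_ne_one (ha0.symm.trans han)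
  refine ⟨n, a, hn, ha, ha0, han, fun k => ⟨hstep k, ?_⟩⟩
  exact (fuzzyCut_subset_cutPlus (ha k.castSucc_lt_succ) (han ▸ ha.monotone k.succ.le_last)).trans
    (subset_ballImage hW)
end

section
/- Let (X, 𝒰) be a uniform space and f : X → X continuous. If the Zadeh extension f̂ : (ℱ(X), 𝒰_S) → (ℱ(X), 𝒰_S) is topologically transitive with respect to the sendograph uniformity, then the induced map f̄ : 𝒦(X) → 𝒦(X), K ↦ f(K), is topologically transitive with respect to the Vietoris topology. -/
open Set Filter Topology
open scoped Uniformity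

/-!
A nonempty compact set `K` is encoded as the fuzzy set `1_{cl K}`, whose `0`-cut is `cl K`.
Closeness of sendographs forces Hausdorff closeness of the `0`-cuts, and the `0`-cut of
`f̂ⁿ w` is `cl (fⁿ {w > 0})`. By continuity `fⁿ (supp w)` lies between `fⁿ {w > 0}` and its
closure, so `A = supp w` witnesses transitivity of `K ↦ f(K)`; passing from sets to their
closures costs one composition of entourages.
-/

section HausdorffUniformity

lemma ballImage_mono_s15 {Y : Type*} {W W' : SetRel Y Y} {A A' : Set Y} (hW : W ⊆ W')
    (hA : A ⊆ A') : ballImage W A ⊆ ballImage W' A' :=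
  fun _ ⟨a, ha, hw⟩ => ⟨a, hA ha, hW hw⟩

lemma KRel.mono {Y : Type*} {W W' : SetRel Y Y} {A B : Set Y} (h : KRel W A B) (hW : W ⊆ W') :
    KRel W' A B :=
  ⟨h.1.trans (ballImage_mono_s15 hW subset_rfl), h.2.trans (ballImage_mono_s15 hW subset_rfl)⟩

variable {X : Type*} [UniformSpace X] {W : SetRel X X} {A A₀ B B₀ : Set X}

lemma ballImage_closure_subset (hW : W ∈ 𝓤 X) (B : Set X) :
    ballImage W (closure B) ⊆ ballImage (W.comp W) B := by
  rintro x ⟨b, hb, hbx⟩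
  obtain ⟨b₀, hb₀b, hb₀⟩ := mem_closure_iff_nhds.1 hb _ (mem_nhds_right b hW)
  exact ⟨b₀, hb₀, b, hb₀b, hbx⟩

lemma KRel.of_subset_closure (hW : W ∈ 𝓤 X) (h : KRel W A B)
    (hA₀ : A₀ ⊆ A) (hA : A ⊆ closure A₀) (hB₀ : B₀ ⊆ B) (hB : B ⊆ closure B₀) :
    KRel (W.comp W) A₀ B₀ :=
  ⟨hA₀.trans <| h.1.trans <|
      (ballImage_mono_s15 subset_rfl hB).trans (ballImage_closure_subset hW B₀),
    hB₀.trans <| h.2.trans <|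
      (ballImage_mono_s15 subset_rfl hA).trans (ballImage_closure_subset hW A₀)⟩

end HausdorffUniformity

section Fuzzy

variable {X : Type*} [TopologicalSpace X]

lemma fuzzyCut_zero (u : X → ℝ) : fuzzyCut u 0 = closure {x | 0 < u x} := if_pos rfl

lemma SendRel.kRel_fuzzyCut_zero {U : SetRel X X} {ε : ℝ} {u v : X → ℝ}
    (hu : ∀ x, 0 ≤ u x) (hv : ∀ x, 0 ≤ v x) (h : SendRel U ε u v) :
    KRel U (fuzzyCut u 0) (fuzzyCut v 0) := by
  constructor
  · intro x hx
    obtain ⟨_, hy, hxy⟩ := h.1 (show (x, (0 : ℝ)) ∈ send u from ⟨hx, ⟨le_rfl, zero_le_one⟩, hu x⟩)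
    exact ⟨_, hy.1, hxy.1⟩
  · intro y hy
    obtain ⟨_, hx, hxy⟩ := h.2 (show (y, (0 : ℝ)) ∈ send v from ⟨hy, ⟨le_rfl, zero_le_one⟩, hv y⟩)
    exact ⟨_, hx.1, hxy.1⟩

lemma pos_set_indicator_closure (K : Set X) :
    {x | 0 < (closure K).indicator (fun _ => (1 : ℝ)) x} = closure K := by
  ext x
  by_cases hx : x ∈ closure K <;> simp [hx]

lemma isFuzzySet_indicator_closure [R1Space X] {K : Set X} (hK : IsCompact K) (hne : K.Nonempty) :
    IsFuzzySet ((closure K).indicator (fun _ => (1 : ℝ))) where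
  mem_Icc x := by by_cases hx : x ∈ closure K <;> simp [hx]
  usc := isClosed_closure.upperSemicontinuous_indicator zero_le_one
  normal := ⟨hne.some, indicator_of_mem (subset_closure hne.some_mem) _⟩
  compact_supp := by
    rw [pos_set_indicator_closure, closure_closure]
    exact hK.closure

end Fuzzy

section Zadeh

variable {X : Type*} {f : X → X} {w : X → ℝ}

lemma zadeh_mem_Icc (hw : ∀ x, w x ∈ Icc (0 : ℝ) 1) (x : X) : zadeh f w x ∈ Icc (0 : ℝ) 1 :=
  ⟨Real.sSup_nonneg (by rintro _ ⟨z, -, rfl⟩; exact (hw z).1),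
    Real.sSup_le (by rintro _ ⟨z, -, rfl⟩; exact (hw z).2) zero_le_one⟩

lemma pos_set_zadeh (hw : BddAbove (range w)) :
    {x | 0 < zadeh f w x} = f '' {x | 0 < w x} := by
  ext x
  constructor
  · intro hx
    have hne : (w '' (f ⁻¹' {x})).Nonempty := by
      rw [nonempty_iff_ne_empty]
      intro he
      simp [zadeh, he] at hx
    obtain ⟨_, ⟨z, hz, rfl⟩, hwz⟩ := exists_lt_of_lt_csSup hne hx
    exact ⟨z, hwz, hz⟩
  · rintro ⟨z, hz, rfl⟩
    show 0 < zadeh f w (f z)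
    exact hz.trans_le (le_csSup (hw.mono (image_subset_range _ _)) ⟨z, rfl, rfl⟩)

lemma iterate_zadeh_mem_Icc (hw : ∀ x, w x ∈ Icc (0 : ℝ) 1) (n : ℕ) (x : X) :
    (zadeh f)^[n] w x ∈ Icc (0 : ℝ) 1 := by
  induction n generalizing x with
  | zero => exact hw x
  | succ n ih =>
    rw [Function.iterate_succ_apply']
    exact zadeh_mem_Icc ih x

lemma pos_set_iterate_zadeh (hw : ∀ x, w x ∈ Icc (0 : ℝ) 1) (n : ℕ) :
    {x | 0 < (zadeh f)^[n] w x} = f^[n] '' {x | 0 < w x} := by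
  induction n with
  | zero => simp
  | succ n ih =>
    have hbdd : BddAbove (range ((zadeh f)^[n] w)) :=
      ⟨1, by rintro _ ⟨x, rfl⟩; exact (iterate_zadeh_mem_Icc hw n x).2⟩
    rw [Function.iterate_succ_apply', pos_set_zadeh hbdd, ih, ← image_comp,
      ← Function.iterate_succ']

end Zadeh

/-- If the Zadeh extension is topologically transitive on `(ℱ(X), 𝒰_S)` (stated via basic
sendograph balls), then the induced map `K ↦ f(K)` is topologically transitive on the
hyperspace of nonempty compact subsets (stated via basic Hausdorff-uniformity balls). -/
theorem stmt15 {X : Type*} [UniformSpace X] {f : X → X} (hf : Continuous f)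
    (htrans : ∀ u v : X → ℝ, IsFuzzySet u → IsFuzzySet v →
      ∀ U ∈ 𝓤 X, ∀ V ∈ 𝓤 X, ∀ ε > (0:ℝ), ∀ δ > (0:ℝ),
      ∃ n : ℕ, 0 < n ∧ ∃ w : X → ℝ, IsFuzzySet w ∧ SendRel U ε u w ∧
        SendRel V δ v ((zadeh f)^[n] w)) :
    ∀ K L : Set X, IsCompact K → K.Nonempty → IsCompact L → L.Nonempty →
      ∀ U ∈ 𝓤 X, ∀ V ∈ 𝓤 X, ∃ n : ℕ, 0 < n ∧ ∃ A : Set X, IsCompact A ∧ A.Nonempty ∧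
        KRel U K A ∧ KRel V L (f^[n] '' A) := by
  intro K L hK hKne hL hLne U hU V hV
  obtain ⟨U', hU', hU'U⟩ := comp_mem_uniformity_sets hU
  obtain ⟨V', hV', hV'V⟩ := comp_mem_uniformity_sets hV
  have hKfuzzy := isFuzzySet_indicator_closure hK hKne
  have hLfuzzy := isFuzzySet_indicator_closure hL hLne
  obtain ⟨n, hn, w, hw, hKw, hLw⟩ := htrans _ _ hKfuzzy hLfuzzy U' hU' V' hV' 1 one_pos 1 one_pos
  set S := {x | 0 < w x}
  have hKS : KRel U' (closure K) (closure S) := by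
    simpa only [fuzzyCut_zero, pos_set_indicator_closure, closure_closure] using
      hKw.kRel_fuzzyCut_zero (fun x => (hKfuzzy.mem_Icc x).1) (fun x => (hw.mem_Icc x).1)
  have hLS : KRel V' (closure L) (closure (f^[n] '' S)) := by
    simpa only [fuzzyCut_zero, pos_set_indicator_closure, closure_closure,
      pos_set_iterate_zadeh hw.mem_Icc] using
      hLw.kRel_fuzzyCut_zero (fun x => (hLfuzzy.mem_Icc x).1)
        (fun x => (iterate_zadeh_mem_Icc hw.mem_Icc n x).1)
  refine ⟨n, hn, closure S, hw.compact_supp, ?_, ?_, ?_⟩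
  · obtain ⟨x, hx⟩ := hw.normal
    exact ⟨x, subset_closure (show 0 < w x by simp [hx])⟩
  · exact (hKS.of_subset_closure hU' subset_closure subset_rfl subset_rfl subset_closure).mono hU'U
  · exact (hLS.of_subset_closure hV' subset_closure subset_rfl
      (image_closure_subset_closure_image (hf.iterate n))
      (closure_mono (image_mono subset_closure))).mono hV'V
end
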